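/- With the setup above, Halt satisfies the recurrence: Halt(T) = 1 for any terminal possible state T, and for any non-terminal possible state C, Halt(C) = Σ_{C ⤳ D, tr(D) > 0} (tr(D)/tr(C)) · Halt(D). -/

import Mathlib

open scoped ENNReal NNReal

/-- Reduction sequences of `k` steps starting at `C` that end in a terminal state. -/
def TermPaths {State : Type*} (step : State → State → Prop) (C : State) (k : ℕ) :
    Set (Fin (k + 1) → State) :=
  {p | p 0 = C ∧ (∀ i : Fin k, step (p i.castSucc) (p i.succ)) ∧
    ¬∃ d, step (p (Fin.last k)) d}

/-- Total trace of the endpoints of terminating reduction sequences of length `≤ n`. -/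
noncomputable def termWeight {State : Type*} (step : State → State → Prop)
    (tr : State → ℝ≥0) (C : State) (n : ℕ) : ℝ≥0∞ :=
  ∑ k ∈ Finset.range (n + 1), ∑' p : TermPaths step C k, (tr (p.1 (Fin.last k)) : ℝ≥0∞)

/-- The probability of termination of a state. -/
noncomputable def Halt {State : Type*} (step : State → State → Prop)
    (tr : State → ℝ≥0) (C : State) : ℝ≥0∞ :=
  (⨆ n, termWeight step tr C n) / (tr C : ℝ≥0∞)

/-!
A terminating path of length `k + 1` from a non-terminal `C` is a step `C ⤳ D` followed by a
terminating path of length `k` from `D`, so `termWeight C (n + 1) = Σ_{C ⤳ D} termWeight D n`,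
and monotone convergence in `ℝ≥0∞` exchanges the supremum over `n` with this sum. Writing
`(⨆ n, termWeight D n) / tr C = (tr D / tr C) * Halt D` gives the recurrence; this needs
`tr D ≠ 0`, but successors with `tr D = 0` contribute nothing on either side, since the trace
never increases along a step.
-/

namespace ENNReal

theorem tsum_iSup_of_monotone {α ι : Type*} [Preorder ι] [IsDirectedOrder ι]
    {f : α → ι → ℝ≥0∞} (hf : ∀ a, Monotone (f a)) :
    ∑' a, ⨆ i, f a i = ⨆ i, ∑' a, f a i := by
  simp only [ENNReal.tsum_eq_iSup_sum]
  rw [iSup_comm]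
  exact iSup_congr fun s => finsetSum_iSup_of_monotone hf

theorem div_eq_div_mul_div {a t : ℝ≥0∞} (x : ℝ≥0∞) (ht : t ≠ 0) (ht' : t ≠ ⊤) :
    a / x = t / x * (a / t) :=
  calc a / x = a * (t * t⁻¹) / x := by rw [ENNReal.mul_inv_cancel ht ht', mul_one]
    _ = t / x * (a / t) := by simp only [div_eq_mul_inv]; ring

end ENNReal

theorem tsum_subtype_and_eq_tsum_subtype {α M : Type*} [AddCommMonoid M] [TopologicalSpace M]
    {p q : α → Prop} (f : α → M) (h : ∀ a, p a → ¬q a → f a = 0) :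
    ∑' a : {a // p a ∧ q a}, f a = ∑' a : {a // p a}, f a := by
  classical
  refine (tsum_subtype {a | p a ∧ q a} f).trans
    ((tsum_congr fun a => ?_).trans (tsum_subtype {a | p a} f).symm)
  by_cases hp : p a
  · by_cases hq : q a
    · simp [Set.indicator, hp, hq]
    · simp [Set.indicator, hp, hq, h a hp hq]
  · simp [Set.indicator, hp]

section TermPaths

variable {State : Type*} {step : State → State → Prop} {C : State} {k : ℕ}

theorem TermPaths.step_one {p : Fin (k + 2) → State} (hp : p ∈ TermPaths step C (k + 1)) :
    step C (p 1) := by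
  simpa [hp.1] using hp.2.1 0

theorem TermPaths.tail_mem {p : Fin (k + 2) → State} (hp : p ∈ TermPaths step C (k + 1)) :
    Fin.tail p ∈ TermPaths step (p 1) k :=
  ⟨rfl, fun i => by simpa [Fin.tail] using hp.2.1 i.succ, by simpa [Fin.tail] using hp.2.2⟩

theorem TermPaths.cons_mem {d : State} {q : Fin (k + 1) → State} (hd : step C d)
    (hq : q ∈ TermPaths step d k) :
    (Fin.cons C q : Fin (k + 2) → State) ∈ TermPaths step C (k + 1) := by
  refine ⟨rfl, fun i => ?_, by simpa [← Fin.succ_last] using hq.2.2⟩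
  induction i using Fin.cases with
  | zero => simpa [hq.1] using hd
  | succ j => simpa [← Fin.succ_castSucc] using hq.2.1 j

variable (step C k)

def termPathsSuccEquiv :
    TermPaths step C (k + 1) ≃ Σ d : {d // step C d}, TermPaths step d.1 k where
  toFun p := ⟨⟨p.1 1, TermPaths.step_one p.2⟩, ⟨Fin.tail p.1, TermPaths.tail_mem p.2⟩⟩
  invFun x := ⟨Fin.cons C x.2.1, TermPaths.cons_mem x.1.2 x.2.2⟩
  left_inv p := Subtype.ext <| by
    conv_rhs => rw [← Fin.cons_self_tail p.1, p.2.1]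
  right_inv x := by
    obtain ⟨⟨d, hd⟩, ⟨q, hq⟩⟩ := x
    refine Sigma.subtype_ext (Subtype.ext ?_) (Fin.tail_cons (α := fun _ => State) C q)
    show (Fin.cons C q : Fin (k + 2) → State) 1 = d
    rw [← Fin.succ_zero_eq_one, Fin.cons_succ, hq.1]

theorem tsum_termPaths_succ (tr : State → ℝ≥0) :
    ∑' p : TermPaths step C (k + 1), (tr (p.1 (Fin.last (k + 1))) : ℝ≥0∞) =
      ∑' d : {d // step C d},
        ∑' q : TermPaths step d.1 k, (tr (q.1 (Fin.last k)) : ℝ≥0∞) := by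
  rw [← ENNReal.tsum_sigma' (f := fun x : Σ d : {d // step C d}, TermPaths step d.1 k =>
      (tr (x.2.1 (Fin.last k)) : ℝ≥0∞)),
    ← (termPathsSuccEquiv step C k).tsum_eq]
  rfl

end TermPaths

section termWeight

variable {State : Type*} (step : State → State → Prop) (tr : State → ℝ≥0)

theorem termWeight_zero (C : State) :
    termWeight step tr C 0 = ∑' p : TermPaths step C 0, (tr (p.1 0) : ℝ≥0∞) := by
  simp only [termWeight, zero_add, Finset.sum_range_one]
  rfl

theorem termWeight_succ (C : State) (n : ℕ) :
    termWeight step tr C (n + 1) =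
      termWeight step tr C 0 + ∑' d : {d // step C d}, termWeight step tr d.1 n := by
  simp only [termWeight, Finset.sum_range_succ' _ (n + 1), tsum_termPaths_succ, zero_add,
    Finset.sum_range_one]
  rw [add_comm, Summable.tsum_finsetSum fun _ _ => ENNReal.summable]

theorem termWeight_mono (C : State) : Monotone (termWeight step tr C) :=
  fun _ _ h => Finset.sum_le_sum_of_subset (Finset.range_subset_range.2 (by omega))

theorem termWeight_zero_of_step {C : State} (hC : ∃ d, step C d) :
    termWeight step tr C 0 = 0 := by
  rw [termWeight_zero, ENNReal.tsum_eq_zero]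
  rintro ⟨p, hp0, -, hterm⟩
  exact absurd (hp0 ▸ hC) hterm

theorem termWeight_zero_of_terminal {T : State} (hT : ¬∃ d, step T d) :
    termWeight step tr T 0 = tr T := by
  have hpaths : TermPaths step T 0 = {fun _ => T} := by
    ext p
    refine ⟨fun hp => funext fun i => ?_, fun hp => hp ▸ ⟨rfl, Fin.elim0, hT⟩⟩
    rw [Fin.fin_one_eq_zero i, hp.1]
  rw [termWeight_zero, hpaths]
  exact tsum_singleton (fun _ => T) fun p => (tr (p 0) : ℝ≥0∞)

theorem termWeight_of_terminal {T : State} (hT : ¬∃ d, step T d) (n : ℕ) :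
    termWeight step tr T n = tr T := by
  cases n with
  | zero => exact termWeight_zero_of_terminal step tr hT
  | succ n =>
    have : IsEmpty {d // step T d} := ⟨fun d => hT ⟨d.1, d.2⟩⟩
    rw [termWeight_succ, tsum_empty, add_zero, termWeight_zero_of_terminal step tr hT]

theorem iSup_termWeight_of_step {C : State} (hC : ∃ d, step C d) :
    ⨆ n, termWeight step tr C n = ∑' d : {d // step C d}, ⨆ n, termWeight step tr d.1 n := by
  rw [← (termWeight_mono step tr C).iSup_nat_add 1]
  simp only [termWeight_succ, termWeight_zero_of_step step tr hC, zero_add]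
  exact (ENNReal.tsum_iSup_of_monotone fun d : {d // step C d} =>
    termWeight_mono step tr d.1).symm

end termWeight

section Trace

variable {State : Type*} {step : State → State → Prop} {tr : State → ℝ≥0}

theorem tr_le_of_step
    (hsum : ∀ s, (∃ d, step s d) →
      (tr s : ℝ≥0∞) = ∑' d : {d // step s d}, (tr d.1 : ℝ≥0∞))
    {s d : State} (h : step s d) : tr d ≤ tr s := by
  have : (tr d : ℝ≥0∞) ≤ tr s :=
    hsum s ⟨d, h⟩ ▸ ENNReal.le_tsum (⟨d, h⟩ : {d // step s d})
  exact_mod_cast this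

variable (hanti : ∀ s d, step s d → tr d ≤ tr s)
include hanti

theorem TermPaths.tr_le {C : State} {k : ℕ} {p : Fin (k + 1) → State}
    (hp : p ∈ TermPaths step C k) (i : Fin (k + 1)) : tr (p i) ≤ tr C := by
  induction i using Fin.induction with
  | zero => rw [hp.1]
  | succ i ih => exact (hanti _ _ (hp.2.1 i)).trans ih

theorem iSup_termWeight_eq_zero {C : State} (hC : tr C = 0) :
    ⨆ n, termWeight step tr C n = 0 := by
  refine ENNReal.iSup_eq_zero.2 fun n =>
    Finset.sum_eq_zero fun k _ => ENNReal.tsum_eq_zero.2 ?_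
  rintro ⟨p, hp⟩
  simpa [hC] using TermPaths.tr_le hanti hp (Fin.last k)

theorem iSup_termWeight_div_eq_mul_halt (x : ℝ≥0∞) (d : State) :
    (⨆ n, termWeight step tr d n) / x = tr d / x * Halt step tr d := by
  by_cases hd : tr d = 0
  · simp [iSup_termWeight_eq_zero hanti hd, hd]
  · exact ENNReal.div_eq_div_mul_div x (by exact_mod_cast hd) ENNReal.coe_ne_top

end Trace

theorem stmt_15_general {State : Type*} (step : State → State → Prop) (tr : State → ℝ≥0)
    (hsum : ∀ s, (∃ d, step s d) →
      (tr s : ℝ≥0∞) = ∑' d : {d // step s d}, (tr d.1 : ℝ≥0∞)) :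
    (∀ T : State, (¬∃ d, step T d) → 0 < tr T → Halt step tr T = 1) ∧
    (∀ C : State, (∃ d, step C d) → 0 < tr C →
      Halt step tr C =
        ∑' d : {d // step C d ∧ 0 < tr d},
          ((tr d.1 : ℝ≥0∞) / (tr C : ℝ≥0∞)) * Halt step tr d.1) := by
  have hanti : ∀ s d, step s d → tr d ≤ tr s := fun _ _ => tr_le_of_step hsum
  refine ⟨fun T hT hT_pos => ?_, fun C hC _ => ?_⟩
  · rw [Halt, iSup_congr (termWeight_of_terminal step tr hT), iSup_const,
      ENNReal.div_self (by exact_mod_cast hT_pos.ne') ENNReal.coe_ne_top]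
  · rw [tsum_subtype_and_eq_tsum_subtype (fun d => (tr d : ℝ≥0∞) / tr C * Halt step tr d)
      fun d _ hd => by simp [nonpos_iff_eq_zero.mp (not_lt.mp hd)],
      Halt, iSup_termWeight_of_step step tr hC, div_eq_mul_inv, ← ENNReal.tsum_mul_right]
    exact tsum_congr fun d => by
      rw [← div_eq_mul_inv, iSup_termWeight_div_eq_mul_halt hanti]

theorem stmt_15 {State : Type*} (step : State → State → Prop) (tr : State → ℝ≥0)
    (hfin : ∀ s, {d | step s d}.Finite)
    (hcard : ∀ s, Set.ncard {d | step s d} ≤ 2)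
    (hsum : ∀ s, (∃ d, step s d) →
      (tr s : ℝ≥0∞) = ∑' d : {d // step s d}, (tr d.1 : ℝ≥0∞)) :
    (∀ T : State, (¬∃ d, step T d) → 0 < tr T → Halt step tr T = 1) ∧
    (∀ C : State, (∃ d, step C d) → 0 < tr C →
      Halt step tr C =
        ∑' d : {d // step C d ∧ 0 < tr d},
          ((tr d.1 : ℝ≥0∞) / (tr C : ℝ≥0∞)) * Halt step tr d.1) :=
  stmt_15_general step tr hsum
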